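/- Let K be a field of characteristic zero, let G be an abelian group, let A be a finite-dimensional non-unital associative K-algebra, and let (B, η) be a universal coacting bialgebra of A. For a bialgebra homomorphism Φ : B → K[G], set A_σ^Φ = { a ∈ A | (id_A ⊗ Φ)(η(a)) = a ⊗ σ } for each σ ∈ G. Then (A_σ^Φ)_{σ ∈ G} is a G-grading of the algebra A, and the assignment Φ ↦ (A_σ^Φ)_{σ ∈ G} is a bijection from the set of bialgebra homomorphisms B → K[G] onto the set of G-gradings of A. -/

import Mathlib

open TensorProduct

universe u

/-- `(C₀, η)` is a universal pair for `(A, B)`. -/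
def IsUniversalAlgPair (K : Type u) [Field K]
    (A : Type u) [NonUnitalRing A] [Module K A] [SMulCommClass K A A] [IsScalarTower K A A]
    (B : Type u) [NonUnitalRing B] [Module K B] [SMulCommClass K B B] [IsScalarTower K B B]
    (C₀ : Type u) [CommRing C₀] [Algebra K C₀]
    (η : B →ₙₐ[K] A ⊗[K] C₀) : Prop :=
  ∀ (C : Type u) [CommRing C] [Algebra K C], ∀ f : B →ₙₐ[K] A ⊗[K] C,
    ∃! Φ : C₀ →ₐ[K] C, ∀ x : B, f x = LinearMap.lTensor A Φ.toLinearMap (η x)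

/-- A coaction of a commutative `K`-bialgebra `B` on the non-unital associative algebra
`A`. -/
def IsAlgCoaction (K : Type u) [Field K]
    (A : Type u) [NonUnitalRing A] [Module K A] [SMulCommClass K A A] [IsScalarTower K A A]
    (B : Type u) [CommRing B] [Bialgebra K B]
    (η : A →ₙₐ[K] A ⊗[K] B) : Prop :=
  (∀ a : A, TensorProduct.rid K A
      (LinearMap.lTensor A (Coalgebra.counit (R := K) (A := B)) (η a)) = a) ∧
  ∀ a : A, LinearMap.lTensor A (Coalgebra.comul (R := K) (A := B)) (η a) =
    TensorProduct.assoc K A B B (LinearMap.rTensor B (η : A →ₗ[K] A ⊗[K] B) (η a))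

/-- The diagonal group-like map `σ ↦ σ ⊗ σ` on the group algebra. -/
noncomputable def diagMonoidHom (K : Type u) [Field K] (G : Type u) [CommGroup G] :
    G →* MonoidAlgebra K G ⊗[K] MonoidAlgebra K G where
  toFun σ := MonoidAlgebra.of K G σ ⊗ₜ[K] MonoidAlgebra.of K G σ
  map_one' := by
    show MonoidAlgebra.of K G 1 ⊗ₜ[K] MonoidAlgebra.of K G 1 = 1
    rw [map_one, Algebra.TensorProduct.one_def]
  map_mul' σ τ := by
    show MonoidAlgebra.of K G (σ * τ) ⊗ₜ[K] MonoidAlgebra.of K G (σ * τ)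
      = (MonoidAlgebra.of K G σ ⊗ₜ[K] MonoidAlgebra.of K G σ) *
        (MonoidAlgebra.of K G τ ⊗ₜ[K] MonoidAlgebra.of K G τ)
    rw [map_mul, Algebra.TensorProduct.tmul_mul_tmul]

/-- The standard comultiplication of the group algebra `K[G]`, determined by `Δ(σ) = σ ⊗ σ`
for `σ ∈ G`. -/
noncomputable def groupComul (K : Type u) [Field K] (G : Type u) [CommGroup G] :
    MonoidAlgebra K G →ₗ[K] MonoidAlgebra K G ⊗[K] MonoidAlgebra K G :=
  (MonoidAlgebra.lift K (MonoidAlgebra K G ⊗[K] MonoidAlgebra K G) G (diagMonoidHom K G)).toLinearMap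

/-- The standard counit of the group algebra `K[G]`, determined by `ε(σ) = 1` for
`σ ∈ G`. -/
noncomputable def groupCounit (K : Type u) [Field K] (G : Type u) [CommGroup G] :
    MonoidAlgebra K G →ₗ[K] K :=
  (MonoidAlgebra.lift K K G (1 : G →* K)).toLinearMap

/-- A bialgebra homomorphism from a commutative `K`-bialgebra `B` to the group algebra
`K[G]` (with its standard Hopf algebra structure in which every `σ ∈ G` is group-like):
a `K`-algebra homomorphism commuting with the counits and comultiplications. -/
structure BialgHomToGroupAlgebra (K : Type u) [Field K] (G : Type u) [CommGroup G]
    (B : Type u) [CommRing B] [Bialgebra K B] : Type u where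
  toAlgHom : B →ₐ[K] MonoidAlgebra K G
  counit_comp : ∀ b : B, groupCounit K G (toAlgHom b) = Coalgebra.counit (R := K) (A := B) b
  comul_comp : ∀ b : B, groupComul K G (toAlgHom b) =
    TensorProduct.map toAlgHom.toLinearMap toAlgHom.toLinearMap
      (Coalgebra.comul (R := K) (A := B) b)

/-- The `σ`-homogeneous component `{ a | (id_A ⊗ Φ)(η a) = a ⊗ σ }` of the grading of `A`
associated to `Φ : B → K[G]`. -/
noncomputable def algGrade {K : Type u} [Field K] {G : Type u} [CommGroup G]
    {A : Type u} [NonUnitalRing A] [Module K A] [SMulCommClass K A A] [IsScalarTower K A A]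
    {B : Type u} [CommRing B] [Bialgebra K B]
    (η : A →ₙₐ[K] A ⊗[K] B) (Φ : B →ₐ[K] MonoidAlgebra K G) (σ : G) : Submodule K A :=
  LinearMap.ker (LinearMap.lTensor A Φ.toLinearMap ∘ₗ (η : A →ₗ[K] A ⊗[K] B)
    - (TensorProduct.mk K A (MonoidAlgebra K G)).flip (MonoidAlgebra.of K G σ))

/-- A `G`-grading of the non-unital associative algebra `A`: an internal direct sum
decomposition `A = ⊕_σ A_σ` with `A_σ · A_τ ⊆ A_{σ τ}`. -/
def IsAlgGrading (K : Type u) [Field K] (G : Type u) [CommGroup G] [DecidableEq G]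
    (A : Type u) [NonUnitalRing A] [Module K A] [SMulCommClass K A A] [IsScalarTower K A A]
    (gr : G → Submodule K A) : Prop :=
  DirectSum.IsInternal gr ∧
    ∀ σ τ : G, ∀ x ∈ gr σ, ∀ y ∈ gr τ, x * y ∈ gr (σ * τ)

/-!
Write `f a = ∑ σ, a_σ ⊗ σ` for a linear map `f : A → A ⊗ K[G]`. Coassociativity of `f` says
that `a_σ` lies in `{a | f a = a ⊗ σ}`, and counitality says `a = ∑ σ, a_σ`; so coactions of
`K[G]` on `A` are the same as `G`-gradings of `A`, multiplicative coactions corresponding to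
algebra gradings. By the universal property, `Φ ↦ (id ⊗ Φ) ∘ η` identifies algebra maps
`B → K[G]` with algebra maps `A → A ⊗ K[G]`, and the uniqueness part of the universal property
shows that `Φ` respects counits and comultiplications exactly when `(id ⊗ Φ) ∘ η` is a coaction.
-/

theorem LinearMap.ext_of_iSup_eq_top {R M N ι : Type*} [Semiring R] [AddCommMonoid M]
    [Module R M] [AddCommMonoid N] [Module R N] {p : ι → Submodule R M} (hp : ⨆ i, p i = ⊤)
    {f g : M →ₗ[R] N} (h : ∀ i, ∀ x ∈ p i, f x = g x) : f = g :=
  LinearMap.ext fun _ ↦ (hp ▸ iSup_le h : ⊤ ≤ LinearMap.eqLocus f g) Submodule.mem_top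

lemma LinearMap.lTensor_map_comp_assoc_comp_rTensor {R M N P : Type*} [CommSemiring R]
    [AddCommMonoid M] [Module R M] [AddCommMonoid N] [Module R N] [AddCommMonoid P]
    [Module R P] (f : M →ₗ[R] M ⊗[R] N) (φ : N →ₗ[R] P) :
    lTensor M (map φ φ) ∘ₗ (TensorProduct.assoc R M N N).toLinearMap ∘ₗ rTensor N f =
      (TensorProduct.assoc R M P P).toLinearMap ∘ₗ rTensor P (lTensor M φ ∘ₗ f) ∘ₗ
        lTensor M φ := by
  rw [← comp_assoc, lTensor, map_map_comp_assoc_eq, comp_assoc, map_comp_rTensor,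
    rTensor_comp_lTensor]
  rfl

section Components

variable {K : Type*} [CommSemiring K] {G : Type*} [DecidableEq G] {M : Type*} [AddCommMonoid M]
  [Module K M]

variable (K G M) in
noncomputable def componentsEquiv : M ⊗[K] MonoidAlgebra K G ≃ₗ[K] (G →₀ M) :=
  (LinearEquiv.lTensor M (MonoidAlgebra.coeffLinearEquiv K)).trans (finsuppScalarRight K K M G)

@[simp]
lemma componentsEquiv_tmul_single (m : M) (σ : G) (k : K) :
    componentsEquiv K G M (m ⊗ₜ MonoidAlgebra.single σ k) = Finsupp.single σ (k • m) := by
  ext τ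
  by_cases h : σ = τ
  · subst h
    simp [componentsEquiv]
  · simp [componentsEquiv, h]

lemma sum_componentsEquiv (x : M ⊗[K] MonoidAlgebra K G) :
    ((componentsEquiv K G M x).sum fun _ m ↦ m) =
      TensorProduct.rid K M (LinearMap.lTensor M Coalgebra.counit x) := by
  have : (Finsupp.lsum K fun _ ↦ LinearMap.id) ∘ₗ (componentsEquiv K G M).toLinearMap =
      (TensorProduct.rid K M).toLinearMap ∘ₗ LinearMap.lTensor M Coalgebra.counit := by
    ext m σ
    simp
  exact LinearMap.congr_fun this x

lemma componentsEquiv_rTensor {N : Type*} [AddCommMonoid N] [Module K N] (g : M →ₗ[K] N)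
    (x : M ⊗[K] MonoidAlgebra K G) :
    componentsEquiv K G N (LinearMap.rTensor _ g x) =
      Finsupp.mapRange.linearMap g (componentsEquiv K G M x) := by
  have : (componentsEquiv K G N).toLinearMap ∘ₗ LinearMap.rTensor _ g =
      Finsupp.mapRange.linearMap g ∘ₗ (componentsEquiv K G M).toLinearMap := by
    ext m τ
    simp
  exact LinearMap.congr_fun this x

lemma componentsEquiv_assoc_symm_lTensor_comul (x : M ⊗[K] MonoidAlgebra K G) (σ : G) :
    componentsEquiv K G _ ((TensorProduct.assoc K M _ _).symm
        (LinearMap.lTensor M Coalgebra.comul x)) σ =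
      componentsEquiv K G M x σ ⊗ₜ MonoidAlgebra.single σ 1 := by
  have : Finsupp.lapply σ ∘ₗ (componentsEquiv K G _).toLinearMap ∘ₗ
        (TensorProduct.assoc K M _ _).symm.toLinearMap ∘ₗ
        LinearMap.lTensor M (Coalgebra.comul (R := K) (A := MonoidAlgebra K G)) =
      (TensorProduct.mk K M _).flip (MonoidAlgebra.single σ 1) ∘ₗ Finsupp.lapply σ ∘ₗ
        (componentsEquiv K G M).toLinearMap := by
    ext m τ
    by_cases h : τ = σ
    · subst h
      simp
    · simp [h]
  exact LinearMap.congr_fun this x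

end Components

section CoactionGrade

variable {K : Type*} [CommRing K] {G : Type*} {M : Type*} [AddCommGroup M] [Module K M]

noncomputable def coactionGrade (f : M →ₗ[K] M ⊗[K] MonoidAlgebra K G) (σ : G) :
    Submodule K M :=
  LinearMap.ker (f - (TensorProduct.mk K M _).flip (MonoidAlgebra.single σ 1))

variable {f : M →ₗ[K] M ⊗[K] MonoidAlgebra K G}

lemma mem_coactionGrade {σ : G} {m : M} :
    m ∈ coactionGrade f σ ↔ f m = m ⊗ₜ MonoidAlgebra.single σ 1 := by
  simp [coactionGrade, sub_eq_zero]

lemma eq_of_coactionGrade_le {g : M →ₗ[K] M ⊗[K] MonoidAlgebra K G}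
    (hf : ⨆ σ, coactionGrade f σ = ⊤) (h : ∀ σ, coactionGrade f σ ≤ coactionGrade g σ) :
    f = g :=
  LinearMap.ext_of_iSup_eq_top hf fun σ m hm ↦ by
    rw [mem_coactionGrade.mp hm, mem_coactionGrade.mp (h σ hm)]

variable [DecidableEq G]

lemma componentsEquiv_of_mem_coactionGrade {σ : G} {m : M} (hm : m ∈ coactionGrade f σ) :
    componentsEquiv K G M (f m) = Finsupp.single σ m := by
  simp [mem_coactionGrade.mp hm]

lemma componentsEquiv_mem_coactionGrade
    (hΔ : ∀ m, LinearMap.lTensor M Coalgebra.comul (f m) =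
      TensorProduct.assoc K M _ _ (LinearMap.rTensor _ f (f m))) (m : M) (σ : G) :
    componentsEquiv K G M (f m) σ ∈ coactionGrade f σ := by
  have := congr(componentsEquiv K G _ ((TensorProduct.assoc K M _ _).symm $(hΔ m)) σ)
  rw [componentsEquiv_assoc_symm_lTensor_comul, LinearEquiv.symm_apply_apply,
    componentsEquiv_rTensor, Finsupp.mapRange.linearMap_apply, Finsupp.mapRange_apply] at this
  exact mem_coactionGrade.mpr this.symm

theorem isInternal_coactionGrade
    (hε : ∀ m, TensorProduct.rid K M (LinearMap.lTensor M Coalgebra.counit (f m)) = m)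
    (hΔ : ∀ m, LinearMap.lTensor M Coalgebra.comul (f m) =
      TensorProduct.assoc K M _ _ (LinearMap.rTensor _ f (f m))) :
    DirectSum.IsInternal (coactionGrade f) := by
  refine DirectSum.isInternal_submodule_of_iSupIndep_of_iSup_eq_top (fun σ ↦ ?_) ?_
  · -- the `σ`-component is the identity on the `σ`-grade and kills all the others
    let π : M →ₗ[K] M := Finsupp.lapply σ ∘ₗ (componentsEquiv K G M).toLinearMap ∘ₗ f
    have hker : ⨆ (τ) (_ : τ ≠ σ), coactionGrade f τ ≤ LinearMap.ker π :=
      iSup₂_le fun τ hτ m hm ↦ by simp [π, componentsEquiv_of_mem_coactionGrade hm, hτ]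
    refine Submodule.disjoint_def.mpr fun m hm hm' ↦ ?_
    simpa [π, componentsEquiv_of_mem_coactionGrade hm] using hker hm'
  · refine eq_top_iff.mpr fun m _ ↦ ?_
    rw [← hε m, ← sum_componentsEquiv]
    exact Submodule.sum_mem _ fun σ _ ↦
      Submodule.mem_iSup_of_mem σ (componentsEquiv_mem_coactionGrade hΔ m σ)

variable {gr : G → Submodule K M}

noncomputable def DirectSum.IsInternal.coaction (h : DirectSum.IsInternal gr) :
    M →ₗ[K] M ⊗[K] MonoidAlgebra K G :=
  DirectSum.toModule K G _
      (fun σ ↦ (TensorProduct.mk K M _).flip (MonoidAlgebra.single σ 1) ∘ₗ (gr σ).subtype) ∘ₗ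
    (LinearEquiv.ofBijective (DirectSum.coeLinearMap gr) h).symm.toLinearMap

lemma DirectSum.IsInternal.coaction_of_mem (h : DirectSum.IsInternal gr) {σ : G} {m : M}
    (hm : m ∈ gr σ) : h.coaction m = m ⊗ₜ MonoidAlgebra.single σ 1 := by
  have hsymm : (LinearEquiv.ofBijective (DirectSum.coeLinearMap gr) h).symm m =
      DirectSum.lof K G (fun σ ↦ gr σ) σ ⟨m, hm⟩ := by
    rw [LinearEquiv.symm_apply_eq, DirectSum.lof_eq_of]
    exact (DirectSum.coeLinearMap_of gr σ ⟨m, hm⟩).symm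
  rw [coaction, LinearMap.comp_apply, LinearEquiv.coe_coe, hsymm, DirectSum.toModule_lof]
  rfl

lemma DirectSum.IsInternal.le_coactionGrade_coaction (h : DirectSum.IsInternal gr) (σ : G) :
    gr σ ≤ coactionGrade h.coaction σ :=
  fun _ hm ↦ mem_coactionGrade.mpr (h.coaction_of_mem hm)

end CoactionGrade

section NonUnitalLTensor

variable {K : Type*} [CommSemiring K] (A : Type*) [NonUnitalSemiring A] [Module K A]
  [SMulCommClass K A A] [IsScalarTower K A A] {B C : Type*} [Semiring B] [Algebra K B]
  [Semiring C] [Algebra K C]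

noncomputable def NonUnitalAlgHom.lTensor (Φ : B →ₐ[K] C) : A ⊗[K] B →ₙₐ[K] A ⊗[K] C :=
  { LinearMap.lTensor A Φ.toLinearMap with
    map_zero' := map_zero _
    map_mul' := (LinearMap.map_mul_iff _).mpr (by ext; simp) }

@[simp]
lemma NonUnitalAlgHom.lTensor_apply (Φ : B →ₐ[K] C) (x : A ⊗[K] B) :
    NonUnitalAlgHom.lTensor A Φ x = LinearMap.lTensor A Φ.toLinearMap x :=
  rfl

end NonUnitalLTensor

section UniversalCoaction

variable {K : Type u} [Field K] {A : Type u} [NonUnitalRing A] [Module K A]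
  [SMulCommClass K A A] [IsScalarTower K A A] {B C : Type u} [CommRing B] [CommRing C]

theorem IsUniversalAlgPair.algHom_ext {A' : Type u} [NonUnitalRing A'] [Module K A']
    [SMulCommClass K A' A'] [IsScalarTower K A' A'] [Algebra K B] [Algebra K C]
    {η : A' →ₙₐ[K] A ⊗[K] B} (huniv : IsUniversalAlgPair K A A' B η) {φ ψ : B →ₐ[K] C}
    (h : ∀ x, LinearMap.lTensor A φ.toLinearMap (η x) = LinearMap.lTensor A ψ.toLinearMap (η x)) :
    φ = ψ :=
  (huniv C ((NonUnitalAlgHom.lTensor A φ).comp η)).unique (fun _ ↦ rfl) h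

variable [Bialgebra K B] [Bialgebra K C] {η : A →ₙₐ[K] A ⊗[K] B}

lemma IsAlgCoaction.lTensor_map_comul (hη : IsAlgCoaction K A B η) (Φ : B →ₐ[K] C) (a : A) :
    LinearMap.lTensor A (map Φ.toLinearMap Φ.toLinearMap)
        (LinearMap.lTensor A Coalgebra.comul (η a)) =
      TensorProduct.assoc K A C C (LinearMap.rTensor C
        ((NonUnitalAlgHom.lTensor A Φ).comp η : A →ₗ[K] A ⊗[K] C)
        ((NonUnitalAlgHom.lTensor A Φ).comp η a)) := by
  rw [hη.2]
  exact LinearMap.congr_fun (LinearMap.lTensor_map_comp_assoc_comp_rTensor _ _) (η a)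

theorem IsAlgCoaction.lTensor (hη : IsAlgCoaction K A B η) (Φ : B →ₐc[K] C) :
    IsAlgCoaction K A C ((NonUnitalAlgHom.lTensor A (Φ : B →ₐ[K] C)).comp η) := by
  refine ⟨fun a ↦ ?_, fun a ↦ ?_⟩ <;>
    rw [NonUnitalAlgHom.comp_apply, NonUnitalAlgHom.lTensor_apply,
      ← LinearMap.lTensor_comp_apply]
  · convert hη.1 a using 4
    exact CoalgHomClass.counit_comp Φ
  · refine Eq.trans ?_ (hη.lTensor_map_comul _ a)
    rw [← LinearMap.lTensor_comp_apply]
    exact congr(LinearMap.lTensor A $((CoalgHomClass.map_comp_comul Φ).symm) (η a))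

theorem IsUniversalAlgPair.counitAlgHom_comp (huniv : IsUniversalAlgPair K A A B η)
    (hη : IsAlgCoaction K A B η) {Φ : B →ₐ[K] C}
    (hΦ : IsAlgCoaction K A C ((NonUnitalAlgHom.lTensor A Φ).comp η)) :
    (Bialgebra.counitAlgHom K C).comp Φ = Bialgebra.counitAlgHom K B :=
  huniv.algHom_ext fun a ↦ (TensorProduct.rid K A).injective <| by
    rw [AlgHom.comp_toLinearMap, LinearMap.lTensor_comp_apply]
    exact (hΦ.1 a).trans (hη.1 a).symm

theorem IsUniversalAlgPair.map_comp_comulAlgHom (huniv : IsUniversalAlgPair K A A B η)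
    (hη : IsAlgCoaction K A B η) {Φ : B →ₐ[K] C}
    (hΦ : IsAlgCoaction K A C ((NonUnitalAlgHom.lTensor A Φ).comp η)) :
    (Algebra.TensorProduct.map Φ Φ).comp (Bialgebra.comulAlgHom K B) =
      (Bialgebra.comulAlgHom K C).comp Φ :=
  huniv.algHom_ext fun a ↦ by
    rw [AlgHom.comp_toLinearMap, AlgHom.comp_toLinearMap, LinearMap.lTensor_comp_apply,
      LinearMap.lTensor_comp_apply]
    exact (hη.lTensor_map_comul Φ a).trans (hΦ.2 a).symm

end UniversalCoaction

section GroupAlgebra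

variable {K : Type u} [Field K] {G : Type u} [CommGroup G]

lemma groupCounit_eq_counit : groupCounit K G = Coalgebra.counit := by
  ext σ
  simp [groupCounit]

lemma groupComul_eq_comul : groupComul K G = Coalgebra.comul := by
  ext σ
  simp [groupComul, diagMonoidHom]

variable {B : Type u} [CommRing B] [Bialgebra K B]

noncomputable def BialgHomToGroupAlgebra.toBialgHom (Φ : BialgHomToGroupAlgebra K G B) :
    B →ₐc[K] MonoidAlgebra K G :=
  BialgHom.ofAlgHom Φ.toAlgHom
    (AlgHom.toLinearMap_injective <| LinearMap.ext fun b ↦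
      (LinearMap.congr_fun groupCounit_eq_counit _).symm.trans (Φ.counit_comp b))
    (AlgHom.toLinearMap_injective <| LinearMap.ext fun b ↦
      (Φ.comul_comp b).symm.trans (LinearMap.congr_fun groupComul_eq_comul _))

noncomputable def BialgHomToGroupAlgebra.ofBialgHom (Φ : B →ₐc[K] MonoidAlgebra K G) :
    BialgHomToGroupAlgebra K G B where
  toAlgHom := Φ
  counit_comp b := by
    rw [groupCounit_eq_counit]
    exact CoalgHomClass.counit_comp_apply Φ b
  comul_comp b := by
    rw [groupComul_eq_comul]
    exact (CoalgHomClass.map_comp_comul_apply Φ b).symm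

lemma BialgHomToGroupAlgebra.toAlgHom_injective :
    Function.Injective (toAlgHom : BialgHomToGroupAlgebra K G B → B →ₐ[K] MonoidAlgebra K G) := by
  rintro ⟨Φ, -, -⟩ ⟨Φ', -, -⟩ rfl
  rfl

end GroupAlgebra

section AlgGrading

variable {K : Type u} [Field K] {G : Type u} [CommGroup G] {B : Type u} [CommRing B]
  [Bialgebra K B] {A : Type u} [NonUnitalRing A] [Module K A] [SMulCommClass K A A]
  [IsScalarTower K A A]

lemma algGrade_eq_coactionGrade (η : A →ₙₐ[K] A ⊗[K] B) (Φ : B →ₐ[K] MonoidAlgebra K G) :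
    algGrade η Φ = coactionGrade ((NonUnitalAlgHom.lTensor A Φ).comp η : A →ₗ[K] _) :=
  rfl

lemma IsAlgCoaction.lTensor_toAlgHom {η : A →ₙₐ[K] A ⊗[K] B} (hη : IsAlgCoaction K A B η)
    (Φ : BialgHomToGroupAlgebra K G B) :
    IsAlgCoaction K A _ ((NonUnitalAlgHom.lTensor A Φ.toAlgHom).comp η) :=
  hη.lTensor Φ.toBialgHom

variable [DecidableEq G]

theorem IsAlgCoaction.isAlgGrading {f : A →ₙₐ[K] A ⊗[K] MonoidAlgebra K G}
    (hf : IsAlgCoaction K A _ f) :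
    IsAlgGrading K G A (coactionGrade (f : A →ₗ[K] A ⊗[K] MonoidAlgebra K G)) := by
  refine ⟨isInternal_coactionGrade hf.1 hf.2, fun σ τ x hx y hy ↦ mem_coactionGrade.mpr ?_⟩
  have hx' : f x = x ⊗ₜ MonoidAlgebra.single σ 1 := mem_coactionGrade.mp hx
  have hy' : f y = y ⊗ₜ MonoidAlgebra.single τ 1 := mem_coactionGrade.mp hy
  change f (x * y) = _
  rw [map_mul, hx', hy', Algebra.TensorProduct.tmul_mul_tmul, MonoidAlgebra.single_mul_single,
    one_mul]

variable {gr : G → Submodule K A}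

noncomputable def IsAlgGrading.coaction (h : IsAlgGrading K G A gr) :
    A →ₙₐ[K] A ⊗[K] MonoidAlgebra K G :=
  { h.1.coaction with
    map_zero' := h.1.coaction.map_zero
    map_mul' := (LinearMap.map_mul_iff _).mpr <|
      LinearMap.ext_of_iSup_eq_top h.1.submodule_iSup_eq_top fun σ x hx ↦
        LinearMap.ext_of_iSup_eq_top h.1.submodule_iSup_eq_top fun τ y hy ↦ by
          simp [h.1.coaction_of_mem hx, h.1.coaction_of_mem hy,
            h.1.coaction_of_mem (h.2 σ τ x hx y hy), Algebra.TensorProduct.tmul_mul_tmul] }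

theorem IsAlgGrading.isAlgCoaction_coaction (h : IsAlgGrading K G A gr) :
    IsAlgCoaction K A _ h.coaction := by
  have hcounit : (TensorProduct.rid K A).toLinearMap ∘ₗ LinearMap.lTensor A Coalgebra.counit ∘ₗ
      h.1.coaction = LinearMap.id :=
    LinearMap.ext_of_iSup_eq_top h.1.submodule_iSup_eq_top fun σ x hx ↦ by
      simp [h.1.coaction_of_mem hx]
  have hcomul : LinearMap.lTensor A Coalgebra.comul ∘ₗ h.1.coaction =
      (TensorProduct.assoc K A _ _).toLinearMap ∘ₗ LinearMap.rTensor _ h.1.coaction ∘ₗ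
        h.1.coaction :=
    LinearMap.ext_of_iSup_eq_top h.1.submodule_iSup_eq_top fun σ x hx ↦ by
      simp [h.1.coaction_of_mem hx]
  exact ⟨fun a ↦ LinearMap.congr_fun hcounit a, fun a ↦ LinearMap.congr_fun hcomul a⟩

theorem IsAlgGrading.coactionGrade_coaction (h : IsAlgGrading K G A gr) :
    coactionGrade (h.coaction : A →ₗ[K] A ⊗[K] MonoidAlgebra K G) = gr :=
  ((h.isAlgCoaction_coaction.isAlgGrading.1.submodule_iSupIndep).le_iff_eq_of_iSup_eq_top
    h.1.submodule_iSup_eq_top).mp (fun σ ↦ h.1.le_coactionGrade_coaction σ) |>.symm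

end AlgGrading

theorem algGrade_bijective_onto_gradings_general
    (K : Type u) [Field K]
    (G : Type u) [CommGroup G] [DecidableEq G]
    (A : Type u) [NonUnitalRing A] [Module K A] [SMulCommClass K A A] [IsScalarTower K A A]
    (B : Type u) [CommRing B] [Bialgebra K B]
    (η : A →ₙₐ[K] A ⊗[K] B)
    (hcoact : IsAlgCoaction K A B η)
    (huniv : IsUniversalAlgPair K A A B η) :
    -- each `Φ` gives a `G`-grading of the algebra `A`
    (∀ Φ : BialgHomToGroupAlgebra K G B, IsAlgGrading K G A (algGrade η Φ.toAlgHom)) ∧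
    -- the assignment is injective
    (∀ Φ Φ' : BialgHomToGroupAlgebra K G B,
      (∀ σ : G, algGrade η Φ.toAlgHom σ = algGrade η Φ'.toAlgHom σ) → Φ = Φ') ∧
    -- the assignment is surjective onto the `G`-gradings of `A`
    (∀ gr : G → Submodule K A, IsAlgGrading K G A gr →
      ∃ Φ : BialgHomToGroupAlgebra K G B, ∀ σ : G, algGrade η Φ.toAlgHom σ = gr σ) := by
  simp only [algGrade_eq_coactionGrade]
  refine ⟨fun Φ ↦ (hcoact.lTensor_toAlgHom Φ).isAlgGrading, fun Φ Φ' h ↦ ?_, fun gr hgr ↦ ?_⟩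
  · have hpush := eq_of_coactionGrade_le
      (hcoact.lTensor_toAlgHom Φ).isAlgGrading.1.submodule_iSup_eq_top fun σ ↦ (h σ).le
    exact BialgHomToGroupAlgebra.toAlgHom_injective
      (huniv.algHom_ext fun a ↦ LinearMap.congr_fun hpush a)
  · obtain ⟨Φ, hΦ, -⟩ := huniv _ hgr.coaction
    have hpush : (NonUnitalAlgHom.lTensor A Φ).comp η = hgr.coaction :=
      NonUnitalAlgHom.ext fun a ↦ (hΦ a).symm
    have hΦ_coact := hpush ▸ hgr.isAlgCoaction_coaction
    refine ⟨.ofBialgHom (.ofAlgHom Φ (huniv.counitAlgHom_comp hcoact hΦ_coact)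
      (huniv.map_comp_comulAlgHom hcoact hΦ_coact)), fun σ ↦ ?_⟩
    change coactionGrade ((NonUnitalAlgHom.lTensor A Φ).comp η : A →ₗ[K] _) σ = gr σ
    rw [hpush, hgr.coactionGrade_coaction]

theorem algGrade_bijective_onto_gradings
    (K : Type u) [Field K] [CharZero K]
    (G : Type u) [CommGroup G] [DecidableEq G]
    (A : Type u) [NonUnitalRing A] [Module K A] [SMulCommClass K A A] [IsScalarTower K A A]
    [FiniteDimensional K A]
    (B : Type u) [CommRing B] [Bialgebra K B]
    (η : A →ₙₐ[K] A ⊗[K] B)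
    (hcoact : IsAlgCoaction K A B η)
    (huniv : IsUniversalAlgPair K A A B η) :
    -- each `Φ` gives a `G`-grading of the algebra `A`
    (∀ Φ : BialgHomToGroupAlgebra K G B, IsAlgGrading K G A (algGrade η Φ.toAlgHom)) ∧
    -- the assignment is injective
    (∀ Φ Φ' : BialgHomToGroupAlgebra K G B,
      (∀ σ : G, algGrade η Φ.toAlgHom σ = algGrade η Φ'.toAlgHom σ) → Φ = Φ') ∧
    -- the assignment is surjective onto the `G`-gradings of `A`
    (∀ gr : G → Submodule K A, IsAlgGrading K G A gr →
      ∃ Φ : BialgHomToGroupAlgebra K G B, ∀ σ : G, algGrade η Φ.toAlgHom σ = gr σ) :=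
  algGrade_bijective_onto_gradings_general K G A B η hcoact huniv
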